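/- Let Γ be a finite digraph and A = Aut(Γ). Suppose V(Γ) is partitioned into sets G₁,…,G_m, each stabilized setwise by A, and suppose a subgroup R ≤ A acts regularly on each G_i with the G_i as R-orbits. If for each i there exists a vertex u_i ∈ G_i such that the stabilizer A_{u_i} fixes every out-neighbor of u_i, and Γ is connected, then A = R. -/

import Mathlib

/-- A permutation `σ` is an automorphism of the digraph with arc relation `Arc`. -/
def isAut {V : Type*} (Arc : V → V → Prop) (σ : Equiv.Perm V) : Prop :=
  ∀ u v, Arc u v ↔ Arc (σ u) (σ v)

/-!
An automorphism `σ` can be corrected by some `ρ ∈ R` so that `ρ⁻¹ σ` fixes a vertex, since the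
blocks are `R`-orbits stabilized by `Aut(Γ)`. Conjugating by `R` spreads the hypothesis on `A_{u_i}`
to every vertex, so the fixed points of an automorphism are closed under forward arcs; closure under
backward arcs comes from the semiregularity of `R`. By connectivity `ρ⁻¹ σ = 1`.
-/

open Equiv Relation

def autGroup {V : Type*} (Arc : V → V → Prop) : Subgroup (Perm V) where
  carrier := {σ | isAut Arc σ}
  mul_mem' {_ τ} hσ hτ u v := (hτ u v).trans (hσ (τ u) (τ v))
  one_mem' _ _ := Iff.rfl
  inv_mem' {σ} hσ u v := by simpa using (hσ (σ⁻¹ u) (σ⁻¹ v)).symm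

def FixesOutNeighbors {V : Type*} (A : Subgroup (Perm V)) (Arc : V → V → Prop) (w : V) : Prop :=
  ∀ τ ∈ A, τ w = w → ∀ v, Arc w v → τ v = v

section

variable {V : Type*} {Arc : V → V → Prop} {A R : Subgroup (Perm V)}

/-- Conjugation by `ρ` carries `A_u` onto `A_{ρ u}` and `Γ⁺(u)` onto `Γ⁺(ρ u)`. -/
theorem FixesOutNeighbors.of_apply_eq {u w : V} {ρ : Perm V}
    (hu : FixesOutNeighbors (autGroup Arc) Arc u) (hρ : ρ ∈ autGroup Arc) (hρu : ρ u = w) :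
    FixesOutNeighbors (autGroup Arc) Arc w := by
  intro τ hτ hτw v hv
  have hconj : ρ⁻¹ * τ * ρ ∈ autGroup Arc :=
    mul_mem (mul_mem (inv_mem hρ) hτ) hρ
  have hconj_u : (ρ⁻¹ * τ * ρ) u = u := by
    rw [Perm.mul_apply, Perm.mul_apply, hρu, hτw, ← hρu]
    simp
  have harc : Arc u (ρ⁻¹ v) := by
    rw [hρ u (ρ⁻¹ v), hρu]
    simpa using hv
  simpa [Perm.mul_apply] using hu _ hconj hconj_u (ρ⁻¹ v) harc

variable (hRA : R ≤ A) (horbit : ∀ σ ∈ A, ∀ w, ∃ ρ ∈ R, ρ w = σ w)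
  (hfree : ∀ ρ ∈ R, ∀ w, ρ w = w → ρ = 1) (hlocal : ∀ w, FixesOutNeighbors A Arc w)
include hRA horbit hfree hlocal

/-- Backwards along an arc `c → b`: the element `ρ ∈ R` with `ρ c = τ c` makes `ρ⁻¹ τ ∈ A_c`,
which then fixes `b`; so `ρ` fixes `b` and is trivial by semiregularity. -/
theorem apply_eq_self_of_arc_of_apply_eq_self {τ : Perm V} (hτ : τ ∈ A) {b c : V}
    (hb : τ b = b) (hbc : Arc b c ∨ Arc c b) : τ c = c := by
  rcases hbc with hbc | hcb
  · exact hlocal b τ hτ hb c hbc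
  obtain ⟨ρ, hρ, hρc⟩ := horbit τ hτ c
  have hρ_b : ρ⁻¹ b = b := by
    have hfix_c : (ρ⁻¹ * τ) c = c := by simp [Perm.mul_apply, ← hρc]
    simpa [Perm.mul_apply, hb] using
      hlocal c _ (mul_mem (inv_mem (hRA hρ)) hτ) hfix_c b hcb
  rw [← hρc, inv_eq_one.mp (hfree _ (inv_mem hρ) b hρ_b), Perm.one_apply]

theorem eq_one_of_apply_eq_self
    (hconn : ∀ u v, ReflTransGen (fun a b => Arc a b ∨ Arc b a) u v)
    {τ : Perm V} (hτ : τ ∈ A) {u : V} (hu : τ u = u) : τ = 1 := by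
  ext v
  induction hconn u v with
  | refl => exact hu
  | tail _ hbc ih =>
    exact apply_eq_self_of_arc_of_apply_eq_self hRA horbit hfree hlocal hτ ih hbc

theorem le_of_forall_fixesOutNeighbors
    (hconn : ∀ u v, ReflTransGen (fun a b => Arc a b ∨ Arc b a) u v) : A ≤ R := by
  intro σ hσ
  rcases isEmpty_or_nonempty V with hV | ⟨⟨u⟩⟩
  · exact Subsingleton.elim σ 1 ▸ R.one_mem
  obtain ⟨ρ, hρ, hρu⟩ := horbit σ hσ u
  have hρσ : ρ⁻¹ * σ = 1 :=
    eq_one_of_apply_eq_self hRA horbit hfree hlocal hconn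
      (mul_mem (inv_mem (hRA hρ)) hσ) (u := u) (by rw [Perm.mul_apply, ← hρu]; simp)
  exact inv_mul_eq_one.mp hρσ ▸ hρ

end

theorem stmt_9 {V : Type*} (Arc : V → V → Prop) {m : ℕ}
    (P : Fin m → Set V)
    (hcover : ∀ v, ∃ i, v ∈ P i)
    (hstab : ∀ σ : Equiv.Perm V, isAut Arc σ → ∀ i, σ '' P i = P i)
    (R : Subgroup (Equiv.Perm V))
    (hRaut : ∀ σ ∈ R, isAut Arc σ)
    (hreg : ∀ i : Fin m, ∀ u ∈ P i, ∀ v ∈ P i, ∃! σ : Equiv.Perm V, σ ∈ R ∧ σ u = v)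
    (hfix : ∀ i : Fin m, ∃ u ∈ P i, ∀ σ : Equiv.Perm V, isAut Arc σ → σ u = u →
      ∀ v, Arc u v → σ v = v)
    (hconn : ∀ u v : V, Relation.ReflTransGen (fun a b => Arc a b ∨ Arc b a) u v) :
    ∀ σ : Equiv.Perm V, isAut Arc σ → σ ∈ R := by
  have hfree : ∀ ρ ∈ R, ∀ w, ρ w = w → ρ = 1 := fun ρ hρ w hw => by
    obtain ⟨i, hwi⟩ := hcover w
    exact (hreg i w hwi w hwi).unique ⟨hρ, hw⟩ ⟨R.one_mem, rfl⟩
  have horbit : ∀ σ ∈ autGroup Arc, ∀ w, ∃ ρ ∈ R, ρ w = σ w := fun σ hσ w => by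
    obtain ⟨i, hwi⟩ := hcover w
    have hσw : σ w ∈ P i := hstab σ hσ i ▸ Set.mem_image_of_mem σ hwi
    exact (hreg i w hwi (σ w) hσw).exists
  have hlocal : ∀ w, FixesOutNeighbors (autGroup Arc) Arc w := fun w => by
    obtain ⟨i, hwi⟩ := hcover w
    obtain ⟨u, hui, hu⟩ := hfix i
    obtain ⟨ρ, ⟨hρ, hρu⟩, -⟩ := hreg i u hui w hwi
    exact FixesOutNeighbors.of_apply_eq hu (hRaut ρ hρ) hρu
  exact fun σ hσ => le_of_forall_fixesOutNeighbors hRaut horbit hfree hlocal hconn hσ
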